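/- (EMPI step guarantee / monotonic improvement) In the finite MDP setup, let f : S → ℝ, let ε = max_{s,a} |Σ_{s'} P(s'|s,a) δ_f(s,a,s')|, and let C = 2γε/(1−γ). If a policy π' satisfies L_{π,f}(π') − C Σ_s d^π(s) D_TV(π'||π)[s] ≥ 0, then J(π') ≥ J(π). -/

import Mathlib

open Finset Matrix

noncomputable section

/-- The state-transition matrix of policy `π`: `(Pmat P π) s' s = Σ_a P(s'|s,a) π(a|s)`. -/
def Pmat {S A : Type*} [Fintype A] (P : S → A → S → ℝ) (π : S → A → ℝ) : Matrix S S ℝ :=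
  Matrix.of fun s' s => ∑ a, P s a s' * π s a

/-- The discounted future state distribution `d^π = (1-γ)(I - γ P_π)⁻¹ μ`. -/
def dpi {S A : Type*} [Fintype S] [Fintype A] [DecidableEq S]
    (γ : ℝ) (P : S → A → S → ℝ) (μ : S → ℝ) (π : S → A → ℝ) : S → ℝ :=
  (1 - γ) • ((1 - γ • Pmat P π)⁻¹).mulVec μ

/-- The expected discounted return `J(π)`. -/
def J {S A : Type*} [Fintype S] [Fintype A] [DecidableEq S]
    (γ : ℝ) (P : S → A → S → ℝ) (R : S → A → S → ℝ) (μ : S → ℝ) (π : S → A → ℝ) : ℝ :=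
  (1 / (1 - γ)) * ∑ s, dpi γ P μ π s * ∑ a, π s a * ∑ s', P s a s' * R s a s'

/-- The TD-error-like quantity `δ_f(s,a,s') = R(s,a,s') + γ f(s') - f(s)`. -/
def δf {S A : Type*} (γ : ℝ) (R : S → A → S → ℝ) (f : S → ℝ) (s : S) (a : A) (s' : S) : ℝ :=
  R s a s' + γ * f s' - f s

/-- The surrogate objective `L_{π,f}(π')`. -/
def Lsur {S A : Type*} [Fintype S] [Fintype A] [DecidableEq S]
    (γ : ℝ) (P : S → A → S → ℝ) (R : S → A → S → ℝ) (μ : S → ℝ) (f : S → ℝ)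
    (π π' : S → A → ℝ) : ℝ :=
  ∑ s, dpi γ P μ π s * ∑ a, (π' s a - π s a) * ∑ s', P s a s' * δf γ R f s a s'

/-- The per-state total variational divergence `D_TV(π'||π)[s] = (1/2) Σ_a |π'(a|s) - π(a|s)|`. -/
def DTV {S A : Type*} [Fintype A] (π' π : S → A → ℝ) (s : S) : ℝ :=
  (1 / 2) * ∑ a, |π' s a - π s a|

/-- `ε = max_{s,a} |Σ_{s'} P(s'|s,a) δ_f(s,a,s')|`. -/
def epsSA {S A : Type*} [Fintype S] [Fintype A] [Nonempty S] [Nonempty A]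
    (γ : ℝ) (P : S → A → S → ℝ) (R : S → A → S → ℝ) (f : S → ℝ) : ℝ :=
  Finset.univ.sup' Finset.univ_nonempty
    fun p : S × A => |∑ s', P p.1 p.2 s' * δf γ R f p.1 p.2 s'|

/-!
Write `A'(s) = Σ_a π'(a|s) Σ_{s'} P(s'|s,a) δ_f(s,a,s')`. Telescoping the potential `f` against
the flow equation `(I - γP_π) d^π = (1-γ) μ` gives
`(1-γ)(J(π') - J(π)) = L_{π,f}(π') + Σ_s (d^{π'}(s) - d^π(s)) A'(s)`, and `|A'| ≤ ε`.
The difference of the state distributions solves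
`(I - γP_{π'})(d^{π'} - d^π) = γ (P_{π'} - P_π) d^π`; for a column-stochastic `Q` the map
`I - γQ` shrinks ℓ¹-norms by at most the factor `1 - γ`, and
`‖(P_{π'} - P_π) d^π‖₁ ≤ 2 Σ_s d^π(s) D_TV(π'‖π)[s]`.
-/

namespace Matrix

variable {n : Type*} [Fintype n] [DecidableEq n] {Q : Matrix n n ℝ} {γ : ℝ}

lemma sum_abs_mulVec_le_of_mem_colStochastic (hQ : Q ∈ colStochastic ℝ n) (y : n → ℝ) :
    ∑ i, |(Q *ᵥ y) i| ≤ ∑ i, |y i| := by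
  calc ∑ i, |(Q *ᵥ y) i| ≤ ∑ i, (Q *ᵥ fun j => |y j|) i := by
        gcongr with i
        refine (abs_sum_le_sum_abs _ _).trans_eq (sum_congr rfl fun j _ => ?_)
        rw [abs_mul, abs_of_nonneg (nonneg_of_mem_colStochastic hQ)]
    _ = ∑ i, |y i| := sum_mulVec_of_mem_colStochastic hQ

lemma one_sub_mul_sum_abs_le_sum_abs_one_sub_smul_mulVec (hQ : Q ∈ colStochastic ℝ n)
    (hγ : 0 ≤ γ) (y : n → ℝ) : (1 - γ) * ∑ i, |y i| ≤ ∑ i, |((1 - γ • Q) *ᵥ y) i| := by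
  have hy : y = (1 - γ • Q) *ᵥ y + γ • Q *ᵥ y := by
    rw [sub_mulVec, one_mulVec, smul_mulVec, sub_add_cancel]
  have : ∑ i, |y i| ≤ ∑ i, |((1 - γ • Q) *ᵥ y) i| + γ * ∑ i, |y i| :=
    calc ∑ i, |y i| ≤ ∑ i, (|((1 - γ • Q) *ᵥ y) i| + γ * |(Q *ᵥ y) i|) := by
          gcongr with i
          conv_lhs => rw [hy]
          simpa [abs_mul, abs_of_nonneg hγ] using
            abs_add_le (((1 - γ • Q) *ᵥ y) i) (γ * (Q *ᵥ y) i)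
      _ ≤ ∑ i, |((1 - γ • Q) *ᵥ y) i| + γ * ∑ i, |y i| := by
          rw [sum_add_distrib, ← mul_sum]
          exact add_le_add_right
            (mul_le_mul_of_nonneg_left (sum_abs_mulVec_le_of_mem_colStochastic hQ y) hγ) _
  linarith

lemma isUnit_det_one_sub_smul_of_mem_colStochastic (hQ : Q ∈ colStochastic ℝ n) (hγ0 : 0 ≤ γ)
    (hγ1 : γ < 1) : IsUnit (1 - γ • Q).det := by
  refine isUnit_iff_ne_zero.2 fun hdet => ?_
  obtain ⟨y, hy0, hy⟩ := exists_mulVec_eq_zero_iff.2 hdet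
  have hle := one_sub_mul_sum_abs_le_sum_abs_one_sub_smul_mulVec hQ hγ0 y
  simp only [hy, Pi.zero_apply, abs_zero, sum_const_zero] at hle
  have habs : ∑ i, |y i| = 0 :=
    le_antisymm (nonpos_of_mul_nonpos_right hle (by linarith)) (by positivity)
  exact hy0 <| funext fun i =>
    abs_eq_zero.1 ((sum_eq_zero_iff_of_nonneg fun j _ => abs_nonneg _).1 habs i (mem_univ i))

lemma nonneg_of_nonneg_one_sub_smul_mulVec (hQ : Q ∈ colStochastic ℝ n) (hγ0 : 0 ≤ γ)
    (hγ1 : γ < 1) {y : n → ℝ} (h : 0 ≤ (1 - γ • Q) *ᵥ y) : 0 ≤ y := by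
  have hsum : ∑ i, ((1 - γ • Q) *ᵥ y) i = (1 - γ) * ∑ i, y i := by
    simp only [sub_mulVec, one_mulVec, smul_mulVec, Pi.sub_apply, Pi.smul_apply, smul_eq_mul,
      sum_sub_distrib, ← mul_sum, sum_mulVec_of_mem_colStochastic hQ]
    ring
  -- `I - γQ` scales total mass by `1 - γ`, so the ℓ¹ bound forces `∑ |y| ≤ ∑ y`.
  have hle := one_sub_mul_sum_abs_le_sum_abs_one_sub_smul_mulVec hQ hγ0 y
  simp only [abs_of_nonneg (h _), hsum] at hle
  have hgap : ∑ i, (|y i| - y i) ≤ 0 := by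
    rw [sum_sub_distrib]
    linarith [le_of_mul_le_mul_left hle (by linarith : (0:ℝ) < 1 - γ)]
  intro i
  have := (single_le_sum (fun j _ => sub_nonneg.2 (le_abs_self (y j))) (mem_univ i)).trans hgap
  exact (abs_nonneg (y i)).trans (sub_nonpos.1 this)

end Matrix

section MDP

variable {S A : Type*} [Fintype S] [Fintype A] {γ : ℝ} {P : S → A → S → ℝ} {μ : S → ℝ}
  {π π' : S → A → ℝ}

lemma sum_mul_sum_eq_vecMul_Pmat (g : S → ℝ) (s : S) :
    ∑ a, π s a * ∑ s', P s a s' * g s' = (g ᵥ* Pmat P π) s := by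
  simp only [vecMul, dotProduct, Pmat, of_apply, mul_sum]
  rw [sum_comm]
  exact sum_congr rfl fun _ _ => sum_congr rfl fun _ _ => by ring

lemma sum_abs_Pmat_sub_Pmat_mulVec_le (hP0 : ∀ s a s', 0 ≤ P s a s')
    (hP1 : ∀ s a, ∑ s', P s a s' = 1) {d : S → ℝ} (hd : 0 ≤ d) :
    ∑ s', |((Pmat P π' - Pmat P π) *ᵥ d) s'| ≤ 2 * ∑ s, d s * DTV π' π s :=
  calc ∑ s', |((Pmat P π' - Pmat P π) *ᵥ d) s'|
      ≤ ∑ s', ∑ s, ∑ a, P s a s' * |π' s a - π s a| * d s := by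
        gcongr with s'
        simp only [mulVec, dotProduct, Matrix.sub_apply, Pmat, of_apply, ← sum_sub_distrib,
          sum_mul]
        refine (abs_sum_le_sum_abs _ _).trans <| sum_le_sum fun s _ =>
          (abs_sum_le_sum_abs _ _).trans_eq <| sum_congr rfl fun a _ => ?_
        rw [← mul_sub, abs_mul, abs_mul, abs_of_nonneg (hP0 s a s'), abs_of_nonneg (hd s)]
    _ = ∑ s, d s * ∑ a, |π' s a - π s a| := by
        rw [sum_comm]
        refine sum_congr rfl fun s _ => ?_
        rw [sum_comm, mul_sum]
        refine sum_congr rfl fun a _ => ?_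
        rw [← sum_mul, ← sum_mul, hP1, one_mul, mul_comm]
    _ = 2 * ∑ s, d s * DTV π' π s := by
        rw [mul_sum]
        exact sum_congr rfl fun s _ => by rw [DTV]; ring

lemma abs_sum_mul_sum_mul_δf_le_epsSA [Nonempty S] [Nonempty A] (hπ0 : ∀ s a, 0 ≤ π s a)
    (hπ1 : ∀ s, ∑ a, π s a = 1) (R : S → A → S → ℝ) (f : S → ℝ) (s : S) :
    |∑ a, π s a * ∑ s', P s a s' * δf γ R f s a s'| ≤ epsSA γ P R f :=
  calc |∑ a, π s a * ∑ s', P s a s' * δf γ R f s a s'|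
      ≤ ∑ a, π s a * epsSA γ P R f := by
        refine (abs_sum_le_sum_abs _ _).trans <| sum_le_sum fun a _ => ?_
        rw [abs_mul, abs_of_nonneg (hπ0 s a)]
        exact mul_le_mul_of_nonneg_left
          (le_sup' (fun p : S × A => |∑ s', P p.1 p.2 s' * δf γ R f p.1 p.2 s'|)
            (mem_univ (s, a))) (hπ0 s a)
    _ = epsSA γ P R f := by rw [← sum_mul, hπ1, one_mul]

variable [DecidableEq S]

lemma Pmat_mem_colStochastic (hP0 : ∀ s a s', 0 ≤ P s a s') (hP1 : ∀ s a, ∑ s', P s a s' = 1)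
    (hπ0 : ∀ s a, 0 ≤ π s a) (hπ1 : ∀ s, ∑ a, π s a = 1) :
    Pmat P π ∈ colStochastic ℝ S := by
  refine mem_colStochastic_iff_sum.2
    ⟨fun s' s => sum_nonneg fun a _ => mul_nonneg (hP0 s a s') (hπ0 s a), fun s => ?_⟩
  simp only [Pmat, of_apply]
  rw [sum_comm]
  simp only [← sum_mul, hP1, one_mul, hπ1]

lemma one_sub_smul_Pmat_mulVec_dpi (hγ0 : 0 ≤ γ) (hγ1 : γ < 1)
    (hπ : Pmat P π ∈ colStochastic ℝ S) :
    (1 - γ • Pmat P π) *ᵥ dpi γ P μ π = (1 - γ) • μ := by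
  rw [dpi, mulVec_smul, mulVec_mulVec,
    mul_nonsing_inv _ (isUnit_det_one_sub_smul_of_mem_colStochastic hπ hγ0 hγ1), one_mulVec]

lemma dpi_nonneg (hγ0 : 0 ≤ γ) (hγ1 : γ < 1) (hπ : Pmat P π ∈ colStochastic ℝ S)
    (hμ0 : ∀ s, 0 ≤ μ s) : 0 ≤ dpi γ P μ π := by
  refine nonneg_of_nonneg_one_sub_smul_mulVec hπ hγ0 hγ1 ?_
  rw [one_sub_smul_Pmat_mulVec_dpi hγ0 hγ1 hπ]
  exact fun s => mul_nonneg (by linarith) (hμ0 s)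

lemma sum_mul_sum_mul_δf_eq (hπ : Pmat P π ∈ colStochastic ℝ S) (R : S → A → S → ℝ)
    (f : S → ℝ) (s : S) :
    ∑ a, π s a * ∑ s', P s a s' * δf γ R f s a s' =
      ∑ a, π s a * ∑ s', P s a s' * R s a s' + γ * (f ᵥ* Pmat P π) s - f s := by
  have h1 := congrFun (one_vecMul_of_mem_colStochastic hπ) s
  rw [← sum_mul_sum_eq_vecMul_Pmat] at h1 ⊢
  simp only [Pi.one_apply, mul_one] at h1
  have hδ : ∀ a, ∑ s', P s a s' * δf γ R f s a s' =
      ∑ s', P s a s' * R s a s' + γ * ∑ s', P s a s' * f s' - f s * ∑ s', P s a s' := by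
    intro a
    simp only [δf, mul_sum, ← sum_add_distrib, ← sum_sub_distrib]
    exact sum_congr rfl fun _ _ => by ring
  simp only [hδ, mul_add, mul_sub, sum_add_distrib, sum_sub_distrib, mul_left_comm (π s _),
    ← mul_sum, h1, mul_one]

lemma one_sub_mul_J_eq (hγ0 : 0 ≤ γ) (hγ1 : γ < 1) (hπ : Pmat P π ∈ colStochastic ℝ S)
    (R : S → A → S → ℝ) (f : S → ℝ) :
    (1 - γ) * J γ P R μ π =
      ∑ s, dpi γ P μ π s * ∑ a, π s a * ∑ s', P s a s' * δf γ R f s a s' +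
        (1 - γ) * ∑ s, μ s * f s := by
  have hd := one_sub_smul_Pmat_mulVec_dpi (μ := μ) hγ0 hγ1 hπ
  have hf : f ⬝ᵥ ((1 - γ • Pmat P π) *ᵥ dpi γ P μ π) =
      ∑ s, dpi γ P μ π s * (f s - γ * (f ᵥ* Pmat P π) s) := by
    simp only [sub_mulVec, one_mulVec, smul_mulVec, dotProduct_sub, dotProduct_smul,
      dotProduct_mulVec]
    simp only [dotProduct, smul_eq_mul, mul_sum, ← sum_sub_distrib]
    exact sum_congr rfl fun s _ => by ring
  rw [hd, dotProduct_smul, smul_eq_mul] at hf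
  have hμf : ∑ s, μ s * f s = f ⬝ᵥ μ := sum_congr rfl fun _ _ => mul_comm _ _
  rw [_root_.J, ← mul_assoc, mul_one_div_cancel (sub_ne_zero.2 hγ1.ne'), one_mul, hμf, hf,
    ← sum_add_distrib]
  exact sum_congr rfl fun s _ => by rw [sum_mul_sum_mul_δf_eq hπ]; ring

lemma one_sub_mul_sum_abs_dpi_sub_dpi_le (hγ0 : 0 ≤ γ) (hγ1 : γ < 1)
    (hP0 : ∀ s a s', 0 ≤ P s a s') (hP1 : ∀ s a, ∑ s', P s a s' = 1)
    (hπ : Pmat P π ∈ colStochastic ℝ S) (hπ' : Pmat P π' ∈ colStochastic ℝ S)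
    (hμ0 : ∀ s, 0 ≤ μ s) :
    (1 - γ) * ∑ s, |dpi γ P μ π' s - dpi γ P μ π s| ≤
      2 * γ * ∑ s, dpi γ P μ π s * DTV π' π s := by
  have hshift : (1 - γ • Pmat P π') *ᵥ (dpi γ P μ π' - dpi γ P μ π) =
      γ • ((Pmat P π' - Pmat P π) *ᵥ dpi γ P μ π) := by
    rw [mulVec_sub, one_sub_smul_Pmat_mulVec_dpi hγ0 hγ1 hπ',
      ← one_sub_smul_Pmat_mulVec_dpi hγ0 hγ1 hπ]
    simp only [sub_mulVec, smul_mulVec, smul_sub]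
    abel
  calc (1 - γ) * ∑ s, |dpi γ P μ π' s - dpi γ P μ π s|
      ≤ ∑ s, |((1 - γ • Pmat P π') *ᵥ (dpi γ P μ π' - dpi γ P μ π)) s| :=
        one_sub_mul_sum_abs_le_sum_abs_one_sub_smul_mulVec hπ' hγ0 _
    _ = γ * ∑ s, |((Pmat P π' - Pmat P π) *ᵥ dpi γ P μ π) s| := by
        simp only [hshift, Pi.smul_apply, smul_eq_mul, abs_mul, abs_of_nonneg hγ0, mul_sum]
    _ ≤ γ * (2 * ∑ s, dpi γ P μ π s * DTV π' π s) := by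
        gcongr
        exact sum_abs_Pmat_sub_Pmat_mulVec_le hP0 hP1 (dpi_nonneg hγ0 hγ1 hπ hμ0)
    _ = 2 * γ * ∑ s, dpi γ P μ π s * DTV π' π s := by ring

lemma one_sub_mul_J_sub_J_eq (hγ0 : 0 ≤ γ) (hγ1 : γ < 1) (hπ : Pmat P π ∈ colStochastic ℝ S)
    (hπ' : Pmat P π' ∈ colStochastic ℝ S) (R : S → A → S → ℝ) (f : S → ℝ) :
    (1 - γ) * (J γ P R μ π' - J γ P R μ π) = Lsur γ P R μ f π π' +
      ∑ s, (dpi γ P μ π' s - dpi γ P μ π s) * ∑ a, π' s a * ∑ s', P s a s' * δf γ R f s a s' := by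
  rw [mul_sub, one_sub_mul_J_eq hγ0 hγ1 hπ' R f, one_sub_mul_J_eq hγ0 hγ1 hπ R f, Lsur]
  simp only [sub_mul, sum_sub_distrib, mul_sub]
  ring

lemma abs_sum_dpi_sub_dpi_mul_le [Nonempty S] [Nonempty A] (hγ0 : 0 ≤ γ) (hγ1 : γ < 1)
    (hP0 : ∀ s a s', 0 ≤ P s a s') (hP1 : ∀ s a, ∑ s', P s a s' = 1)
    (hπ : Pmat P π ∈ colStochastic ℝ S) (hπ'0 : ∀ s a, 0 ≤ π' s a)
    (hπ'1 : ∀ s, ∑ a, π' s a = 1) (hμ0 : ∀ s, 0 ≤ μ s) (R : S → A → S → ℝ) (f : S → ℝ) :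
    |∑ s, (dpi γ P μ π' s - dpi γ P μ π s) * ∑ a, π' s a * ∑ s', P s a s' * δf γ R f s a s'| ≤
      2 * γ * epsSA γ P R f / (1 - γ) * ∑ s, dpi γ P μ π s * DTV π' π s := by
  have hshift := one_sub_mul_sum_abs_dpi_sub_dpi_le hγ0 hγ1 hP0 hP1 hπ
    (Pmat_mem_colStochastic hP0 hP1 hπ'0 hπ'1) hμ0
  have hε : 0 ≤ epsSA γ P R f :=
    (abs_nonneg _).trans (abs_sum_mul_sum_mul_δf_le_epsSA hπ'0 hπ'1 R f (Classical.arbitrary S))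
  calc _ ≤ ∑ s, |dpi γ P μ π' s - dpi γ P μ π s| * epsSA γ P R f := by
        refine (abs_sum_le_sum_abs _ _).trans <| sum_le_sum fun s _ => ?_
        rw [abs_mul]
        exact mul_le_mul_of_nonneg_left (abs_sum_mul_sum_mul_δf_le_epsSA hπ'0 hπ'1 R f s)
          (abs_nonneg _)
    _ ≤ _ := by
        rw [← sum_mul, div_mul_eq_mul_div, le_div_iff₀ (by linarith)]
        linarith [mul_le_mul_of_nonneg_left hshift hε]

end MDP

theorem stmt_16_general {S A : Type*} [Fintype S] [Fintype A] [Nonempty S] [Nonempty A] [DecidableEq S]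
    (γ : ℝ) (hγ0 : 0 ≤ γ) (hγ1 : γ < 1)
    (P : S → A → S → ℝ) (hP0 : ∀ s a s', 0 ≤ P s a s') (hP1 : ∀ s a, ∑ s', P s a s' = 1)
    (R : S → A → S → ℝ)
    (μ : S → ℝ) (hμ0 : ∀ s, 0 ≤ μ s)
    (π π' : S → A → ℝ)
    (hπ0 : ∀ s a, 0 ≤ π s a) (hπ1 : ∀ s, ∑ a, π s a = 1)
    (hπ'0 : ∀ s a, 0 ≤ π' s a) (hπ'1 : ∀ s, ∑ a, π' s a = 1)
    (f : S → ℝ)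
    (hstep : Lsur γ P R μ f π π'
        - (2 * γ * epsSA γ P R f / (1 - γ)) * ∑ s, dpi γ P μ π s * DTV π' π s ≥ 0) :
    J γ P R μ π' ≥ J γ P R μ π := by
  have hπ := Pmat_mem_colStochastic hP0 hP1 hπ0 hπ1
  have hdiff := one_sub_mul_J_sub_J_eq (μ := μ) hγ0 hγ1 hπ
    (Pmat_mem_colStochastic hP0 hP1 hπ'0 hπ'1) R f
  have hcross := abs_sum_dpi_sub_dpi_mul_le hγ0 hγ1 hP0 hP1 hπ hπ'0 hπ'1 hμ0 R f
  have hgain : 0 ≤ (1 - γ) * (J γ P R μ π' - J γ P R μ π) := by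
    rw [hdiff]
    linarith [neg_abs_le (∑ s, (dpi γ P μ π' s - dpi γ P μ π s) *
      ∑ a, π' s a * ∑ s', P s a s' * δf γ R f s a s')]
  exact sub_nonneg.1 ((mul_nonneg_iff_of_pos_left (by linarith)).1 hgain)

theorem stmt_16 {S A : Type*} [Fintype S] [Fintype A] [Nonempty S] [Nonempty A] [DecidableEq S]
    (γ : ℝ) (hγ0 : 0 ≤ γ) (hγ1 : γ < 1)
    (P : S → A → S → ℝ) (hP0 : ∀ s a s', 0 ≤ P s a s') (hP1 : ∀ s a, ∑ s', P s a s' = 1)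
    (R : S → A → S → ℝ)
    (μ : S → ℝ) (hμ0 : ∀ s, 0 ≤ μ s) (hμ1 : ∑ s, μ s = 1)
    (π π' : S → A → ℝ)
    (hπ0 : ∀ s a, 0 ≤ π s a) (hπ1 : ∀ s, ∑ a, π s a = 1)
    (hπ'0 : ∀ s a, 0 ≤ π' s a) (hπ'1 : ∀ s, ∑ a, π' s a = 1)
    (f : S → ℝ)
    (hstep : Lsur γ P R μ f π π'
        - (2 * γ * epsSA γ P R f / (1 - γ)) * ∑ s, dpi γ P μ π s * DTV π' π s ≥ 0) :
    J γ P R μ π' ≥ J γ P R μ π :=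
  stmt_16_general γ hγ0 hγ1 P hP0 hP1 R μ hμ0 π π' hπ0 hπ1 hπ'0 hπ'1 f hstep
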